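/- arXiv:1501.00153 — 4 statements merged into one kernel-verified Lean document; each statement's English description precedes it below -/
import Mathlib

section
/- For any matroid M = (ρ, E) and any X ⊆ E, the rank satisfies ρ(X) = min over cyclic flats F of (ρ(F) + |X \ F|). -/
open Finset

structure FinMatroid (α : Type*) [DecidableEq α] where
  E : Finset α
  rk : Finset α → ℕ
  rk_le_card : ∀ X, X ⊆ E → rk X ≤ X.card
  rk_mono : ∀ X Y, X ⊆ Y → Y ⊆ E → rk X ≤ rk Y
  rk_submod : ∀ X Y, X ⊆ E → Y ⊆ E → rk (X ∪ Y) + rk (X ∩ Y) ≤ rk X + rk Y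

namespace FinMatroid

variable {α : Type*} [DecidableEq α]

/-- Nullity: η(X) = |X| − ρ(X). -/
def eta (M : FinMatroid α) (X : Finset α) : ℕ := X.card - M.rk X

/-- A circuit is a minimal dependent set. -/
def Circuit (M : FinMatroid α) (C : Finset α) : Prop :=
  C ⊆ M.E ∧ M.rk C < C.card ∧ ∀ Y, Y ⊂ C → M.rk Y = Y.card

/-- A cyclic set is a (possibly empty) union of circuits. -/
def Cyclic (M : FinMatroid α) (X : Finset α) : Prop :=
  X ⊆ M.E ∧ ∀ x ∈ X, ∃ C, M.Circuit C ∧ C ⊆ X ∧ x ∈ C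

/-- Closure: cl(X) = {x ∈ E : ρ(X ∪ {x}) = ρ(X)}. -/
def cl (M : FinMatroid α) (X : Finset α) : Finset α :=
  M.E.filter (fun x => M.rk (insert x X) = M.rk X)

/-- A flat is a closure-closed subset of the ground set. -/
def Flat (M : FinMatroid α) (F : Finset α) : Prop :=
  F ⊆ M.E ∧ M.cl F = F

/-- A cyclic flat is a flat that is a union of circuits. -/
def CyclicFlat (M : FinMatroid α) (F : Finset α) : Prop :=
  M.Cyclic F ∧ M.Flat F

/-- Minimum distance d = min {|X| : ρ(E \ X) < ρ(E)}. -/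
noncomputable def dist (M : FinMatroid α) : ℕ :=
  sInf {m | ∃ X, X ⊆ M.E ∧ X.card = m ∧ M.rk (M.E \ X) < M.rk M.E}

/-- S is an (r,δ)-locality set: |S| ≤ r + δ − 1 and
    min {|X| : X ⊆ S, ρ(S \ X) < ρ(S)} ≥ δ. -/
def LocalitySet (M : FinMatroid α) (r δ : ℕ) (S : Finset α) : Prop :=
  S ⊆ M.E ∧ S.card ≤ r + δ - 1 ∧
    ∀ X, X ⊆ S → M.rk (S \ X) < M.rk S → δ ≤ X.card

/-- M has all-symbol (r,δ)-locality. -/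
def HasLocality (M : FinMatroid α) (r δ : ℕ) : Prop :=
  ∀ x ∈ M.E, ∃ S, x ∈ S ∧ M.LocalitySet r δ S

/-- Restriction of M to X ⊆ E. -/
def restrict (M : FinMatroid α) (X : Finset α) (hX : X ⊆ M.E) : FinMatroid α where
  E := X
  rk := M.rk
  rk_le_card := fun Y hY => M.rk_le_card Y (hY.trans hX)
  rk_mono := fun Y Z h hZ => M.rk_mono Y Z h (hZ.trans hX)
  rk_submod := fun Y Z hY hZ => M.rk_submod Y Z (hY.trans hX) (hZ.trans hX)

end FinMatroid

namespace FinMatroid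

variable {α : Type*} [DecidableEq α] (M : FinMatroid α)

lemma rk_empty_eq : M.rk ∅ = 0 :=
  Nat.le_zero.mp (by simpa using M.rk_le_card ∅ (Finset.empty_subset _))

lemma rk_union_le (A B : Finset α) (hA : A ⊆ M.E) (hB : B ⊆ M.E) :
    M.rk (A ∪ B) ≤ M.rk A + M.rk B := by
  have := M.rk_submod A B hA hB; omega

lemma rk_union_le_add_sdiff (A B : Finset α) (hA : A ⊆ M.E) (hB : B ⊆ M.E) :
    M.rk (A ∪ B) ≤ M.rk A + (B \ A).card := by
  have h1 : A ∪ B = A ∪ (B \ A) := (Finset.union_sdiff_self_eq_union).symm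
  have h2 : M.rk (A ∪ (B \ A)) ≤ M.rk A + M.rk (B \ A) :=
    M.rk_union_le A (B \ A) hA ((Finset.sdiff_subset).trans hB)
  have h3 : M.rk (B \ A) ≤ (B \ A).card :=
    M.rk_le_card _ ((Finset.sdiff_subset).trans hB)
  rw [h1]; omega

lemma rk_insert_le (x : α) (A : Finset α) (hx : x ∈ M.E) (hA : A ⊆ M.E) :
    M.rk (insert x A) ≤ M.rk A + 1 := by
  have h := M.rk_union_le_add_sdiff A {x} hA (by simpa using hx)
  have he : A ∪ {x} = insert x A := by ext a; simp [or_comm]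
  rw [he] at h
  have hc : ({x} \ A).card ≤ 1 := by
    have := Finset.card_le_card (Finset.sdiff_subset (s := {x}) (t := A))
    simpa using this
  omega

lemma rk_union_eq_of_forall_insert (X : Finset α) (hX : X ⊆ M.E) :
    ∀ Y : Finset α, Y ⊆ M.E → (∀ y ∈ Y, M.rk (insert y X) = M.rk X) →
      M.rk (X ∪ Y) = M.rk X := by
  intro Y
  induction Y using Finset.induction_on with
  | empty => simp
  | @insert a Y ha ih =>
    intro hsub h
    have hY : Y ⊆ M.E := (Finset.subset_insert a Y).trans hsub
    have ha' : a ∈ M.E := hsub (Finset.mem_insert_self a Y)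
    have ih' : M.rk (X ∪ Y) = M.rk X := ih hY (fun y hy => h y (Finset.mem_insert_of_mem hy))
    have hU : (X ∪ Y) ∪ insert a X = insert a (X ∪ Y) := by
      rw [Finset.union_insert, Finset.union_eq_left.mpr Finset.subset_union_left]
    have hsm := M.rk_submod (X ∪ Y) (insert a X)
      (Finset.union_subset hX hY) (Finset.insert_subset ha' hX)
    rw [hU] at hsm
    have hint : X ⊆ (X ∪ Y) ∩ insert a X := by
      intro b hb; simp [Finset.mem_inter, hb]
    have hmono : M.rk X ≤ M.rk ((X ∪ Y) ∩ insert a X) :=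
      M.rk_mono _ _ hint ((Finset.inter_subset_left).trans (Finset.union_subset hX hY))
    have hins : M.rk (insert a X) = M.rk X := h a (Finset.mem_insert_self a Y)
    have hge : M.rk (X ∪ Y) ≤ M.rk (insert a (X ∪ Y)) :=
      M.rk_mono _ _ (Finset.subset_insert _ _)
        (Finset.insert_subset ha' (Finset.union_subset hX hY))
    have hgoal : M.rk (insert a (X ∪ Y)) = M.rk (X ∪ Y) := by omega
    rw [Finset.union_insert, hgoal, ih']

lemma cl_subset_E (X : Finset α) : M.cl X ⊆ M.E := Finset.filter_subset _ _

lemma subset_cl (X : Finset α) (hX : X ⊆ M.E) : X ⊆ M.cl X := by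
  intro x hx
  simp only [cl, Finset.mem_filter]
  exact ⟨hX hx, by rw [Finset.insert_eq_self.mpr hx]⟩

lemma mem_cl_iff {x : α} {X : Finset α} :
    x ∈ M.cl X ↔ x ∈ M.E ∧ M.rk (insert x X) = M.rk X := Finset.mem_filter

lemma rk_cl (X : Finset α) (hX : X ⊆ M.E) : M.rk (M.cl X) = M.rk X := by
  have h := M.rk_union_eq_of_forall_insert X hX (M.cl X) (M.cl_subset_E X)
    (fun y hy => (M.mem_cl_iff.mp hy).2)
  have : X ∪ M.cl X = M.cl X := Finset.union_eq_right.mpr (M.subset_cl X hX)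
  rwa [this] at h

lemma cl_flat (X : Finset α) (hX : X ⊆ M.E) : M.Flat (M.cl X) := by
  refine ⟨M.cl_subset_E X, Finset.Subset.antisymm ?_ (M.subset_cl _ (M.cl_subset_E X))⟩
  intro x hx
  obtain ⟨hxE, hr⟩ := M.mem_cl_iff.mp hx
  refine M.mem_cl_iff.mpr ⟨hxE, ?_⟩
  have h1 : M.rk (insert x X) ≤ M.rk (insert x (M.cl X)) :=
    M.rk_mono _ _ (Finset.insert_subset_insert _ (M.subset_cl X hX))
      (Finset.insert_subset hxE (M.cl_subset_E X))
  have h2 : M.rk X ≤ M.rk (insert x X) :=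
    M.rk_mono _ _ (Finset.subset_insert _ _) (Finset.insert_subset hxE hX)
  have h3 := M.rk_cl X hX
  omega

lemma cl_mono (X Y : Finset α) (hXY : X ⊆ Y) (hY : Y ⊆ M.E) : M.cl X ⊆ M.cl Y := by
  intro x hx
  obtain ⟨hxE, hr⟩ := M.mem_cl_iff.mp hx
  refine M.mem_cl_iff.mpr ⟨hxE, ?_⟩
  have hX : X ⊆ M.E := hXY.trans hY
  have hU : Y ∪ insert x X = insert x Y := by
    rw [Finset.union_insert, Finset.union_eq_left.mpr hXY]
  have hsm := M.rk_submod Y (insert x X) hY (Finset.insert_subset hxE hX)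
  rw [hU] at hsm
  have hint : X ⊆ Y ∩ insert x X := fun b hb => by
    simp [Finset.mem_inter, hXY hb, hb]
  have hmono : M.rk X ≤ M.rk (Y ∩ insert x X) :=
    M.rk_mono _ _ hint ((Finset.inter_subset_left).trans hY)
  have hge : M.rk Y ≤ M.rk (insert x Y) :=
    M.rk_mono _ _ (Finset.subset_insert _ _) (Finset.insert_subset hxE hY)
  omega

lemma indep_of_forall_drop : ∀ (A : Finset α), A ⊆ M.E →
    (∀ a ∈ A, M.rk (A.erase a) < M.rk A) → M.rk A = A.card := by
  intro A
  induction A using Finset.strongInduction with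
  | _ A ih =>
    intro hA h
    rcases Finset.eq_empty_or_nonempty A with rfl | ⟨a, ha⟩
    · simp [M.rk_empty_eq]
    · have hstep : ∀ b ∈ A.erase a, M.rk ((A.erase a).erase b) < M.rk (A.erase a) := by
        intro b hb
        obtain ⟨hba, hbA⟩ := Finset.mem_erase.mp hb
        have hU : A.erase a ∪ A.erase b = A := by
          ext c; simp [Finset.mem_union, Finset.mem_erase]
          by_cases hca : c = a <;> by_cases hcb : c = b <;> simp [hca, hcb, ha, hbA] <;> tauto
        have hI : A.erase a ∩ A.erase b = (A.erase a).erase b := by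
          ext c; simp [Finset.mem_inter, Finset.mem_erase]; tauto
        have hsm := M.rk_submod (A.erase a) (A.erase b)
          ((Finset.erase_subset _ _).trans hA) ((Finset.erase_subset _ _).trans hA)
        rw [hU, hI] at hsm
        have h1 := h a ha
        have h2 := h b hbA
        omega
      have hIH : M.rk (A.erase a) = (A.erase a).card :=
        ih (A.erase a) (Finset.erase_ssubset ha) ((Finset.erase_subset _ _).trans hA) hstep
      have hins : M.rk A ≤ M.rk (A.erase a) + 1 := by
        have := M.rk_insert_le a (A.erase a) (hA ha) ((Finset.erase_subset _ _).trans hA)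
        rwa [Finset.insert_erase ha] at this
      have hlt := h a ha
      have hcard : (A.erase a).card = A.card - 1 := Finset.card_erase_of_mem ha
      have hle := M.rk_le_card A hA
      have hpos : 0 < A.card := Finset.card_pos.mpr ⟨a, ha⟩
      omega

lemma exists_erase_rk_eq (A : Finset α) (hA : A ⊆ M.E) (h : M.rk A < A.card) :
    ∃ a ∈ A, M.rk (A.erase a) = M.rk A := by
  by_contra hc
  push_neg at hc
  have : ∀ a ∈ A, M.rk (A.erase a) < M.rk A := by
    intro a ha
    have hne := hc a ha
    have hle : M.rk (A.erase a) ≤ M.rk A :=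
      M.rk_mono _ _ (Finset.erase_subset _ _) hA
    omega
  exact absurd (M.indep_of_forall_drop A hA this) (by omega)

lemma indep_subset (B Y : Finset α) (hB : B ⊆ M.E) (hBi : M.rk B = B.card)
    (hY : Y ⊆ B) : M.rk Y = Y.card := by
  have h1 : M.rk (Y ∪ B) ≤ M.rk Y + (B \ Y).card :=
    M.rk_union_le_add_sdiff Y B (hY.trans hB) hB
  rw [Finset.union_eq_right.mpr hY] at h1
  have h2 : (B \ Y).card = B.card - Y.card := Finset.card_sdiff_of_subset hY
  have h3 : Y.card ≤ B.card := Finset.card_le_card hY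
  have h4 : M.rk Y ≤ Y.card := M.rk_le_card Y (hY.trans hB)
  omega

lemma exists_circuit (e : α) (A : Finset α) (he : e ∈ M.E) (hA : A ⊆ M.E) (heA : e ∉ A)
    (h : M.rk (insert e A) = M.rk A) :
    ∃ C, M.Circuit C ∧ e ∈ C ∧ C ⊆ insert e A := by
  classical
  set S := A.powerset.filter (fun B => M.rk (insert e B) = M.rk B) with hS
  have hAS : A ∈ S := by simp [hS, h]
  obtain ⟨B, hBS, hBmin⟩ := S.exists_min_image Finset.card ⟨A, hAS⟩
  obtain ⟨hBA, hBr⟩ := by simpa [hS, Finset.mem_filter, Finset.mem_powerset] using hBS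
  have hBE : B ⊆ M.E := hBA.trans hA
  have heB : e ∉ B := fun hcon => heA (hBA hcon)
  -- B is independent
  have hBi : M.rk B = B.card := by
    by_contra hni
    have hlt : M.rk B < B.card := lt_of_le_of_ne (M.rk_le_card B hBE) hni
    obtain ⟨b, hb, hbr⟩ := M.exists_erase_rk_eq B hBE hlt
    have hmem : B.erase b ∈ S := by
      have h1 : M.rk (insert e (B.erase b)) ≤ M.rk (insert e B) :=
        M.rk_mono _ _ (Finset.insert_subset_insert _ (Finset.erase_subset _ _))
          (Finset.insert_subset he hBE)
      have h2 : M.rk (B.erase b) ≤ M.rk (insert e (B.erase b)) :=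
        M.rk_mono _ _ (Finset.subset_insert _ _)
          (Finset.insert_subset he ((Finset.erase_subset _ _).trans hBE))
      simp only [hS, Finset.mem_filter, Finset.mem_powerset]
      exact ⟨(Finset.erase_subset _ _).trans hBA, by omega⟩
    have := hBmin _ hmem
    have := Finset.card_erase_of_mem hb
    have hpos : 0 < B.card := Finset.card_pos.mpr ⟨b, hb⟩
    omega
  refine ⟨insert e B, ⟨Finset.insert_subset he hBE, ?_, ?_⟩, Finset.mem_insert_self _ _,
    Finset.insert_subset_insert _ hBA⟩
  · rw [hBr, hBi, Finset.card_insert_of_notMem heB]; omega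
  · intro Y hY
    by_cases heY : e ∈ Y
    · set B' := Y.erase e with hB'
      have hB'B : B' ⊆ B := by
        intro b hb
        obtain ⟨hbe, hbY⟩ := Finset.mem_erase.mp hb
        rcases Finset.mem_insert.mp (hY.subset hbY) with h | h
        · exact absurd h hbe
        · exact h
      have hYeq : Y = insert e B' := by
        rw [hB', Finset.insert_erase heY]
      have hB'ne : B' ≠ B := by
        intro hcon
        apply hY.ne
        rw [hYeq, hcon]
      have hB'ss : B' ⊂ B := hB'B.ssubset_of_ne hB'ne
      have hB'i : M.rk B' = B'.card := M.indep_subset B B' hBE hBi hB'B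
      have heB' : e ∉ B' := fun hcon => heB (hB'B hcon)
      -- insert e B' must increase rank, else contradicts minimality
      have hstrict : M.rk B' < M.rk (insert e B') := by
        have hge : M.rk B' ≤ M.rk (insert e B') :=
          M.rk_mono _ _ (Finset.subset_insert _ _)
            (Finset.insert_subset he (hB'B.trans hBE))
        rcases lt_or_eq_of_le hge with h | h
        · exact h
        · exfalso
          have hmem : B' ∈ S := by
            simp only [hS, Finset.mem_filter, Finset.mem_powerset]
            exact ⟨hB'B.trans hBA, h.symm⟩
          have := hBmin _ hmem
          have := Finset.card_lt_card hB'ss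
          omega
      have hle : M.rk (insert e B') ≤ (insert e B').card :=
        M.rk_le_card _ (Finset.insert_subset he (hB'B.trans hBE))
      rw [hYeq]
      rw [Finset.card_insert_of_notMem heB'] at hle ⊢
      omega
    · have hYB : Y ⊆ B := by
        intro b hb
        rcases Finset.mem_insert.mp (hY.subset hb) with h | h
        · exact absurd (h ▸ hb) heY
        · exact h
      exact M.indep_subset B Y hBE hBi hYB

lemma cyclic_of_no_coloop (C : Finset α) (hC : C ⊆ M.E)
    (h : ∀ e ∈ C, M.rk (C.erase e) = M.rk C) : M.Cyclic C := by
  refine ⟨hC, fun x hx => ?_⟩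
  have hxE : x ∈ M.E := hC hx
  have her : M.rk (insert x (C.erase x)) = M.rk (C.erase x) := by
    rw [Finset.insert_erase hx, h x hx]
  obtain ⟨D, hD, hxD, hDsub⟩ := M.exists_circuit x (C.erase x) hxE
    ((Finset.erase_subset _ _).trans hC) (Finset.notMem_erase _ _) her
  rw [Finset.insert_erase hx] at hDsub
  exact ⟨D, hD, hDsub, hxD⟩

lemma exists_cyclicFlat_min : ∀ (X : Finset α), X ⊆ M.E →
    ∃ F, M.CyclicFlat F ∧ F ⊆ M.cl X ∧ M.rk X = M.rk F + (X \ F).card := by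
  intro X
  induction X using Finset.strongInduction with
  | _ X ih =>
    intro hX
    by_cases hcol : ∀ e ∈ M.cl X, M.rk ((M.cl X).erase e) = M.rk (M.cl X)
    · refine ⟨M.cl X, ⟨M.cyclic_of_no_coloop _ (M.cl_subset_E X) hcol, M.cl_flat X hX⟩,
        Finset.Subset.refl _, ?_⟩
      have : X \ M.cl X = ∅ := Finset.sdiff_eq_empty_iff_subset.mpr (M.subset_cl X hX)
      rw [this, M.rk_cl X hX]
      simp
    · push_neg at hcol
      obtain ⟨e, he, hne⟩ := hcol
      have heE : e ∈ M.E := M.cl_subset_E X he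
      have hlt : M.rk ((M.cl X).erase e) < M.rk (M.cl X) := by
        have := M.rk_mono ((M.cl X).erase e) (M.cl X) (Finset.erase_subset _ _)
          (M.cl_subset_E X)
        omega
      have heX : e ∈ X := by
        by_contra hc
        have hsub : X ⊆ (M.cl X).erase e := fun b hb =>
          Finset.mem_erase.mpr ⟨fun hcon => hc (hcon ▸ hb), M.subset_cl X hX hb⟩
        have h1 : M.rk X ≤ M.rk ((M.cl X).erase e) :=
          M.rk_mono _ _ hsub ((Finset.erase_subset _ _).trans (M.cl_subset_E X))
        have h2 := M.rk_cl X hX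
        omega
      have hXe : X.erase e ⊆ M.E := (Finset.erase_subset _ _).trans hX
      have hrXe : M.rk X = M.rk (X.erase e) + 1 := by
        have h1 : M.rk (X.erase e) ≤ M.rk ((M.cl X).erase e) := by
          refine M.rk_mono _ _ (fun b hb => ?_)
            ((Finset.erase_subset _ _).trans (M.cl_subset_E X))
          obtain ⟨hbe, hbX⟩ := Finset.mem_erase.mp hb
          exact Finset.mem_erase.mpr ⟨hbe, M.subset_cl X hX hbX⟩
        have h2 : M.rk X ≤ M.rk (X.erase e) + 1 := by
          have := M.rk_insert_le e (X.erase e) heE hXe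
          rwa [Finset.insert_erase heX] at this
        have h3 := M.rk_cl X hX
        omega
      obtain ⟨F, hF, hFsub, hFr⟩ := ih (X.erase e) (Finset.erase_ssubset heX) hXe
      have heF : e ∉ F := by
        intro hc
        have := hFsub hc
        obtain ⟨_, hcl⟩ := M.mem_cl_iff.mp this
        rw [Finset.insert_erase heX] at hcl
        omega
      have hFclX : F ⊆ M.cl X :=
        hFsub.trans (M.cl_mono (X.erase e) X (Finset.erase_subset _ _) hX)
      refine ⟨F, hF, hFclX, ?_⟩
      have hsd : X \ F = insert e ((X.erase e) \ F) := by
        ext b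
        simp only [Finset.mem_sdiff, Finset.mem_insert, Finset.mem_erase]
        constructor
        · rintro ⟨hbX, hbF⟩
          by_cases hbe : b = e
          · exact Or.inl hbe
          · exact Or.inr ⟨⟨hbe, hbX⟩, hbF⟩
        · rintro (rfl | ⟨⟨_, hbX⟩, hbF⟩)
          · exact ⟨heX, heF⟩
          · exact ⟨hbX, hbF⟩
      have hnotmem : e ∉ (X.erase e) \ F := fun hc =>
        (Finset.notMem_erase e X) (Finset.mem_sdiff.mp hc).1
      rw [hsd, Finset.card_insert_of_notMem hnotmem]
      omega

end FinMatroid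

theorem rk_eq_min_over_cyclicFlats {α : Type*} [DecidableEq α] (M : FinMatroid α)
    (X : Finset α) (hX : X ⊆ M.E) :
    M.rk X = sInf {m | ∃ F, M.CyclicFlat F ∧ m = M.rk F + (X \ F).card} := by
  obtain ⟨F₀, hF₀, _, hr₀⟩ := M.exists_cyclicFlat_min X hX
  apply le_antisymm
  · have hne : {m | ∃ F, M.CyclicFlat F ∧ m = M.rk F + (X \ F).card}.Nonempty :=
      Set.nonempty_of_mem (⟨F₀, hF₀, hr₀⟩ :
        M.rk X ∈ {m | ∃ F, M.CyclicFlat F ∧ m = M.rk F + (X \ F).card})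
    refine le_csInf hne ?_
    rintro m ⟨F, hF, rfl⟩
    have hFE : F ⊆ M.E := hF.2.1
    have h1 : M.rk X ≤ M.rk (F ∪ X) :=
      M.rk_mono _ _ Finset.subset_union_right (Finset.union_subset hFE hX)
    have h2 := M.rk_union_le_add_sdiff F X hFE hX
    omega
  · exact Nat.sInf_le ⟨F₀, hF₀, hr₀⟩
end

section
/- If M = (ρ, E) is a matroid with (r, δ)-locality and k = ρ(E) > 0, then δ ≤ d, where d = min{|X| : ρ(E \ X) < k}. -/
open Finset

lemma rk_insert_of_span {α : Type*} [DecidableEq α] (M : FinMatroid α)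
    {T B : Finset α} {x : α} (hTB : T ⊆ B) (hB : B ⊆ M.E) (hx : x ∈ M.E)
    (h : M.rk (insert x T) = M.rk T) : M.rk (insert x B) = M.rk B := by
  have hxB : insert x B ⊆ M.E := Finset.insert_subset hx hB
  have h1 := M.rk_submod B (insert x T) hB (Finset.insert_subset hx (hTB.trans hB))
  have hunion : B ∪ insert x T = insert x B := by
    ext y
    simp only [Finset.mem_union, Finset.mem_insert]
    constructor
    · rintro (hy | rfl | hy)
      · exact Or.inr hy
      · exact Or.inl rfl
      · exact Or.inr (hTB hy)
    · rintro (rfl | hy)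
      · exact Or.inr (Or.inl rfl)
      · exact Or.inl hy
  have hinter : T ⊆ B ∩ insert x T := fun y hy =>
    Finset.mem_inter.2 ⟨hTB hy, Finset.mem_insert_of_mem hy⟩
  have h2 : M.rk T ≤ M.rk (B ∩ insert x T) :=
    M.rk_mono _ _ hinter (Finset.inter_subset_left.trans hB)
  rw [hunion, h] at h1
  have h4 : M.rk B ≤ M.rk (insert x B) :=
    M.rk_mono _ _ (Finset.subset_insert _ _) hxB
  omega

lemma rk_union_of_span {α : Type*} [DecidableEq α] (M : FinMatroid α)
    {A : Finset α} (hA : A ⊆ M.E) (X : Finset α) (hX : X ⊆ M.E)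
    (h : ∀ x ∈ X, M.rk (insert x A) = M.rk A) : M.rk (A ∪ X) = M.rk A := by
  induction X using Finset.induction_on with
  | empty => simp
  | @insert a s has ih =>
    have hsE : s ⊆ M.E := (Finset.subset_insert _ _).trans hX
    have hih := ih hsE (fun y hy => h y (Finset.mem_insert_of_mem hy))
    have haE : a ∈ M.E := hX (Finset.mem_insert_self _ _)
    have hkey := rk_insert_of_span M (Finset.subset_union_left (s₂ := s))
      (Finset.union_subset hA hsE) haE (h a (Finset.mem_insert_self _ _))
    calc M.rk (A ∪ insert a s) = M.rk (insert a (A ∪ s)) := by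
          rw [Finset.union_insert]
      _ = M.rk (A ∪ s) := hkey
      _ = M.rk A := hih

theorem delta_le_dist {α : Type*} [DecidableEq α] (M : FinMatroid α)
    (r δ : ℕ) (hk : 0 < M.rk M.E) (hδ : 2 ≤ δ) (hloc : M.HasLocality r δ) :
    δ ≤ M.dist := by
  apply le_csInf
  · refine ⟨M.E.card, M.E, Finset.Subset.refl _, rfl, ?_⟩
    have : M.rk (M.E \ M.E) ≤ 0 := by
      have := M.rk_le_card (M.E \ M.E) (Finset.sdiff_subset)
      simpa using this
    omega
  · rintro b ⟨X, hXE, rfl, hrk⟩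
    by_contra hlt
    push_neg at hlt
    -- show rk (E \ X) = rk E, contradiction
    set A := M.E \ X with hAdef
    have hAE : A ⊆ M.E := Finset.sdiff_subset
    have hins : ∀ x ∈ X, M.rk (insert x A) = M.rk A := by
      intro x hxX
      have hxE : x ∈ M.E := hXE hxX
      obtain ⟨S, hxS, hSE, _, hSloc⟩ := hloc x hxE
      -- rk (S \ X) = rk S
      have hcard : (X ∩ S).card < δ := lt_of_le_of_lt
        (Finset.card_le_card (Finset.inter_subset_left)) hlt
      have hnlt : ¬ M.rk (S \ (X ∩ S)) < M.rk S := fun hc =>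
        absurd (hSloc (X ∩ S) Finset.inter_subset_right hc) (by omega)
      have hSdiff : S \ (X ∩ S) = S \ X := by
        ext y; simp only [Finset.mem_sdiff, Finset.mem_inter]; tauto
      rw [hSdiff] at hnlt
      have hle : M.rk (S \ X) ≤ M.rk S := M.rk_mono _ _ Finset.sdiff_subset hSE
      have heq : M.rk (S \ X) = M.rk S := by omega
      -- rk (insert x (S \ X)) = rk (S \ X)
      have hsub1 : S \ X ⊆ insert x (S \ X) := Finset.subset_insert _ _
      have hsub2 : insert x (S \ X) ⊆ S :=
        Finset.insert_subset hxS Finset.sdiff_subset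
      have h1 : M.rk (S \ X) ≤ M.rk (insert x (S \ X)) :=
        M.rk_mono _ _ hsub1 (hsub2.trans hSE)
      have h2 : M.rk (insert x (S \ X)) ≤ M.rk S := M.rk_mono _ _ hsub2 hSE
      have hTins : M.rk (insert x (S \ X)) = M.rk (S \ X) := by omega
      -- lift to A
      have hTA : S \ X ⊆ A := by
        intro y hy
        have := Finset.mem_sdiff.1 hy
        exact Finset.mem_sdiff.2 ⟨hSE this.1, this.2⟩
      exact rk_insert_of_span M hTA hAE hxE hTins
    have hfinal := rk_union_of_span M hAE X hXE hins
    have hAX : A ∪ X = M.E := by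
      ext y
      simp only [hAdef, Finset.mem_union, Finset.mem_sdiff]
      constructor
      · rintro (⟨h, _⟩ | h)
        · exact h
        · exact hXE h
      · intro hy
        by_cases hyX : y ∈ X
        · exact Or.inr hyX
        · exact Or.inl ⟨hy, hyX⟩
    rw [hAX] at hfinal
    omega
end

section
/- If M = (ρ, E) is a matroid with (r, δ)-locality, n = |E| and k = ρ(E) > 0, then k ≤ n − ⌈k/r⌉·(δ − 1). -/
open Finset

namespace Aux
variable {α : Type*} [DecidableEq α] (M : FinMatroid α)

lemma rk_empty : M.rk ∅ = 0 :=
  Nat.le_zero.mp (by simpa using M.rk_le_card ∅ (Finset.empty_subset _))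

lemma rk_insert_le (A : Finset α) (x : α) (hA : A ⊆ M.E) (hx : x ∈ M.E) :
    M.rk (insert x A) ≤ M.rk A + 1 := by
  have h := M.rk_submod A {x} hA (by simpa using hx)
  have h1 : M.rk {x} ≤ 1 := by simpa using M.rk_le_card {x} (by simpa using hx)
  have hu : A ∪ {x} = insert x A := by ext z; simp [or_comm]
  rw [hu] at h
  omega

lemma rk_union_le (A : Finset α) (hA : A ⊆ M.E) :
    ∀ B, B ⊆ M.E → M.rk (A ∪ B) ≤ M.rk A + B.card := by
  intro B
  induction B using Finset.induction_on with
  | empty => intro _; simp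
  | @insert x B hx ih =>
    intro hB
    have hBE : B ⊆ M.E := fun z hz => hB (Finset.mem_insert_of_mem hz)
    have hxE : x ∈ M.E := hB (Finset.mem_insert_self x B)
    have : A ∪ insert x B = insert x (A ∪ B) := Finset.union_insert ..
    rw [this, Finset.card_insert_of_notMem hx]
    have := rk_insert_le M (A ∪ B) x (Finset.union_subset hA hBE) hxE
    have := ih hBE
    omega

lemma rk_span : ∀ (n : ℕ) (U V : Finset α), V ⊆ M.E → U ⊆ V → (V \ U).card ≤ n →
    (∀ x ∈ V, M.rk (insert x U) = M.rk U) → M.rk V = M.rk U := by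
  intro n
  induction n with
  | zero =>
    intro U V hV hUV hc _
    have : V \ U = ∅ := Finset.card_eq_zero.mp (Nat.le_zero.mp hc)
    have : V = U := Finset.Subset.antisymm (fun z hz => by
      by_contra hzU
      exact absurd (Finset.mem_sdiff.mpr ⟨hz, hzU⟩) (by simp [this])) hUV
    rw [this]
  | succ n ih =>
    intro U V hV hUV hc hcl
    by_cases h : V \ U = ∅
    · have : V = U := Finset.Subset.antisymm (fun z hz => by
        by_contra hzU
        exact absurd (Finset.mem_sdiff.mpr ⟨hz, hzU⟩) (by simp [h])) hUV
      rw [this]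
    · obtain ⟨x, hx⟩ := Finset.nonempty_iff_ne_empty.mpr h
      have hxV : x ∈ V := (Finset.mem_sdiff.mp hx).1
      have hxU : x ∉ U := (Finset.mem_sdiff.mp hx).2
      set V' := V.erase x with hV'
      have hV'V : V' ⊆ V := Finset.erase_subset x V
      have hUV' : U ⊆ V' := fun z hz => Finset.mem_erase.mpr ⟨fun he => hxU (he ▸ hz), hUV hz⟩
      have hcd : V' \ U = (V \ U).erase x := by
        ext z; simp [hV', Finset.mem_erase, Finset.mem_sdiff]; tauto
      have hc' : (V' \ U).card ≤ n := by
        rw [hcd, Finset.card_erase_of_mem hx]; omega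
      have h1 : M.rk V' = M.rk U :=
        ih U V' (hV'V.trans hV) hUV' hc' (fun y hy => hcl y (hV'V hy))
      have hsub := M.rk_submod V' (insert x U) (hV'V.trans hV)
        (Finset.insert_subset (hV hxV) ((hUV'.trans hV'V).trans hV))
      have hun : V' ∪ insert x U = V := by
        ext z
        have h1 : z ∈ U → z ∈ V := fun h => hUV h
        simp only [hV', Finset.mem_union, Finset.mem_erase, Finset.mem_insert]
        by_cases hzx : z = x <;> simp [hzx, hxV] <;> tauto
      have hin : V' ∩ insert x U = U := by
        ext z
        have h1 : z ∈ U → z ∈ V := fun h => hUV h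
        simp only [hV', Finset.mem_inter, Finset.mem_erase, Finset.mem_insert]
        by_cases hzx : z = x <;> simp [hzx, hxU] <;> tauto
      rw [hun, hin, h1, hcl x hxV] at hsub
      have := M.rk_mono U V hUV hV
      omega

lemma exists_increase (U : Finset α) (hU : U ⊆ M.E) (hlt : M.rk U < M.rk M.E) :
    ∃ x ∈ M.E, M.rk U < M.rk (insert x U) := by
  by_contra h
  push_neg at h
  have : ∀ x ∈ M.E, M.rk (insert x U) = M.rk U := by
    intro x hx
    have h1 := h x hx
    have h2 : M.rk U ≤ M.rk (insert x U) :=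
      M.rk_mono U (insert x U) (Finset.subset_insert x U) (Finset.insert_subset hx hU)
    omega
  have := rk_span M (M.E \ U).card U M.E (le_refl _) hU (le_refl _) this
  omega

lemma step_lemma (r δ : ℕ) (hr : 0 < r) (hδ : 2 ≤ δ) (U S : Finset α)
    (hU : U ⊆ M.E) (hS : M.LocalitySet r δ S) (hlt : M.rk U < M.rk (U ∪ S)) :
    M.rk (U ∪ S) ≤ M.rk U + r ∧
      U.card + (M.rk (U ∪ S) - M.rk U) + (δ - 1) ≤ (U ∪ S).card := by
  obtain ⟨hSE, hScard, hSloc⟩ := hS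
  have hUSE : U ∪ S ⊆ M.E := Finset.union_subset hU hSE
  -- rk (U ∪ S) ≤ rk U + rk S
  have hsub1 : M.rk (U ∪ S) ≤ M.rk U + M.rk S := by
    have := M.rk_submod U S hU hSE
    omega
  have hrkS_pos : 0 < M.rk S := by omega
  -- |S| ≥ δ
  have hScard_ge : δ ≤ S.card := by
    apply hSloc S (le_refl _)
    rw [Finset.sdiff_self, rk_empty M]
    exact hrkS_pos
  -- rk S ≤ r
  have hrkS_le : M.rk S ≤ r := by
    obtain ⟨X₀, hX₀S, hX₀c⟩ := Finset.exists_subset_card_eq (s := S) (n := δ - 1) (by omega)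
    have hnd : ¬ M.rk (S \ X₀) < M.rk S := by
      intro h
      have := hSloc X₀ hX₀S h
      omega
    have h1 : M.rk (S \ X₀) ≤ (S \ X₀).card :=
      M.rk_le_card _ ((Finset.sdiff_subset).trans hSE)
    have h2 : (S \ X₀).card = S.card - (δ - 1) := by
      rw [Finset.card_sdiff_of_subset hX₀S, hX₀c]
    omega
  constructor
  · omega
  -- choose minimal B ⊆ S \ U with rk (U ∪ B) = rk (U ∪ S)
  · have hTne : (((S \ U).powerset).filter
        (fun B => M.rk (U ∪ B) = M.rk (U ∪ S))).Nonempty := by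
      refine ⟨S \ U, ?_⟩
      rw [Finset.mem_filter, Finset.mem_powerset]
      exact ⟨le_refl _, by rw [Finset.union_sdiff_self_eq_union]⟩
    obtain ⟨B, hBmem, hBmin⟩ := Finset.exists_min_image _ Finset.card hTne
    rw [Finset.mem_filter, Finset.mem_powerset] at hBmem
    obtain ⟨hBsub, hBrk⟩ := hBmem
    have hBS : B ⊆ S := hBsub.trans Finset.sdiff_subset
    have hBE : B ⊆ M.E := hBS.trans hSE
    have hBnotU : ∀ z ∈ B, z ∉ U := fun z hz => (Finset.mem_sdiff.mp (hBsub hz)).2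
    -- t ≤ |B|
    have htB : M.rk (U ∪ S) - M.rk U ≤ B.card := by
      have := rk_union_le M U hU B hBE
      omega
    -- B nonempty
    have hBne : B.Nonempty := by
      rcases Finset.eq_empty_or_nonempty B with h | h
      · rw [h, Finset.union_empty] at hBrk; omega
      · exact h
    obtain ⟨y, hy⟩ := hBne
    have hyS : y ∈ S := hBS hy
    have hyU : y ∉ U := hBnotU y hy
    -- minimality at y
    have hery : M.rk (U ∪ B.erase y) < M.rk (U ∪ B) := by
      have hle : M.rk (U ∪ B.erase y) ≤ M.rk (U ∪ B) :=
        M.rk_mono _ _ (Finset.union_subset_union_right (Finset.erase_subset y B))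
          (Finset.union_subset hU hBE)
      rcases Nat.lt_or_ge (M.rk (U ∪ B.erase y)) (M.rk (U ∪ B)) with h | h
      · exact h
      · exfalso
        have heq : M.rk (U ∪ B.erase y) = M.rk (U ∪ S) := by omega
        have hmem : B.erase y ∈ ((S \ U).powerset).filter
            (fun B => M.rk (U ∪ B) = M.rk (U ∪ S)) := by
          rw [Finset.mem_filter, Finset.mem_powerset]
          exact ⟨(Finset.erase_subset y B).trans hBsub, heq⟩
        have := hBmin _ hmem
        have := Finset.card_erase_of_mem hy
        have := Finset.card_pos.mpr ⟨y, hy⟩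
        omega
    -- X = (S \ U) \ B, X' = insert y X
    set X : Finset α := (S \ U) \ B with hX
    have hyX : y ∉ X := fun h => (Finset.mem_sdiff.mp h).2 hy
    set X' : Finset α := insert y X with hX'
    have hX'S : X' ⊆ S := by
      intro z hz
      rcases Finset.mem_insert.mp hz with rfl | hz
      · exact hyS
      · exact ((Finset.sdiff_subset).trans Finset.sdiff_subset) hz
    have hSX' : S \ X' = (S ∩ U) ∪ B.erase y := by
      ext z
      have hzB : z ∈ B → z ∈ S ∧ z ∉ U := fun h => Finset.mem_sdiff.mp (hBsub h)
      simp only [hX', hX, Finset.mem_sdiff, Finset.mem_insert, Finset.mem_union,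
        Finset.mem_inter, Finset.mem_erase]
      by_cases hzy : z = y
      · subst hzy; simp [hyS, hyU]
      · by_cases hzU : z ∈ U <;> by_cases hzBB : z ∈ B <;> simp [hzy, hzU, hzBB] <;> tauto
    -- rk (S \ X') < rk S
    have hdrop : M.rk (S \ X') < M.rk S := by
      rcases Nat.lt_or_ge (M.rk (S \ X')) (M.rk S) with h | h
      · exact h
      · exfalso
        have hAE : U ∪ B.erase y ⊆ M.E :=
          Finset.union_subset hU ((Finset.erase_subset y B).trans hBE)
        have hs := M.rk_submod (U ∪ B.erase y) S hAE hSE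
        have hun : (U ∪ B.erase y) ∪ S = U ∪ S := by
          ext z
          have hzB : z ∈ B → z ∈ S := fun h => hBS h
          simp only [Finset.mem_union, Finset.mem_erase]
          tauto
        have hinc : S \ X' ⊆ (U ∪ B.erase y) ∩ S := by
          rw [hSX']
          intro z hz
          rcases Finset.mem_union.mp hz with hz | hz
          · exact Finset.mem_inter.mpr ⟨Finset.mem_union_left _ (Finset.mem_inter.mp hz).2,
              (Finset.mem_inter.mp hz).1⟩
          · exact Finset.mem_inter.mpr ⟨Finset.mem_union_right _ hz,
              hBS (Finset.mem_erase.mp hz).2⟩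
        have hmono : M.rk (S \ X') ≤ M.rk ((U ∪ B.erase y) ∩ S) :=
          M.rk_mono _ _ hinc ((Finset.inter_subset_right).trans hSE)
        rw [hun] at hs
        omega
    have hX'card : δ ≤ X'.card := hSloc X' hX'S hdrop
    have hXcard : δ - 1 ≤ X.card := by
      have := Finset.card_insert_of_notMem hyX
      rw [hX'] at hX'card
      omega
    -- |S \ U| = |X| + |B|
    have hpart : X.card + B.card = (S \ U).card := by
      rw [hX]
      exact Finset.card_sdiff_add_card_eq_card hBsub
    have hcardUS : (S \ U).card + U.card = (U ∪ S).card := by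
      rw [Finset.card_sdiff_add_card, Finset.union_comm]
    omega

lemma grow (r δ : ℕ) (hr : 0 < r) (hδ : 2 ≤ δ) (hloc : M.HasLocality r δ) :
    ∀ (n : ℕ) (U : Finset α), U ⊆ M.E → M.rk M.E - M.rk U ≤ n →
    ∃ W, W ⊆ M.E ∧
      U.card + (M.rk M.E - M.rk U) +
        ((M.rk M.E - M.rk U + r - 1) / r) * (δ - 1) ≤ W.card := by
  intro n
  induction n with
  | zero =>
    intro U hU hc
    refine ⟨U, hU, ?_⟩
    have h0 : M.rk M.E - M.rk U = 0 := Nat.le_zero.mp hc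
    rw [h0]
    have : (0 + r - 1) / r = 0 := Nat.div_eq_of_lt (by omega)
    rw [this]
    omega
  | succ n ih =>
    intro U hU hc
    by_cases heq : M.rk M.E ≤ M.rk U
    · refine ⟨U, hU, ?_⟩
      have h0 : M.rk M.E - M.rk U = 0 := by omega
      rw [h0]
      have : (0 + r - 1) / r = 0 := Nat.div_eq_of_lt (by omega)
      rw [this]
      omega
    · push_neg at heq
      obtain ⟨x, hxE, hxinc⟩ := exists_increase M U hU heq
      obtain ⟨S, hxS, hSloc⟩ := hloc x hxE
      have hSE : S ⊆ M.E := hSloc.1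
      have hUSE : U ∪ S ⊆ M.E := Finset.union_subset hU hSE
      have hins : insert x U ⊆ U ∪ S := by
        intro z hz
        rcases Finset.mem_insert.mp hz with rfl | hz
        · exact Finset.mem_union_right _ hxS
        · exact Finset.mem_union_left _ hz
      have hlt : M.rk U < M.rk (U ∪ S) :=
        lt_of_lt_of_le hxinc (M.rk_mono _ _ hins hUSE)
      obtain ⟨hstep1, hstep2⟩ := step_lemma M r δ hr hδ U S hU hSloc hlt
      have hUSk : M.rk (U ∪ S) ≤ M.rk M.E := M.rk_mono _ _ hUSE (le_refl _)
      have hc' : M.rk M.E - M.rk (U ∪ S) ≤ n := by omega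
      obtain ⟨W, hWE, hW⟩ := ih (U ∪ S) hUSE hc'
      refine ⟨W, hWE, ?_⟩
      -- arithmetic
      set k := M.rk M.E
      set u := M.rk U
      set s := M.rk (U ∪ S)
      have hdiv : (k - u + r - 1) / r ≤ (k - s + r - 1) / r + 1 := by
        have h1 : (k - s + r - 1) / r + 1 = (k - s + r - 1 + r) / r :=
          (Nat.add_div_right _ hr).symm
        rw [h1]
        exact Nat.div_le_div_right (by omega)
      have hmul : ((k - u + r - 1) / r) * (δ - 1) ≤
          ((k - s + r - 1) / r) * (δ - 1) + (δ - 1) := by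
        calc ((k - u + r - 1) / r) * (δ - 1)
            ≤ ((k - s + r - 1) / r + 1) * (δ - 1) := Nat.mul_le_mul_right _ hdiv
          _ = ((k - s + r - 1) / r) * (δ - 1) + (δ - 1) := by rw [Nat.add_mul, Nat.one_mul]
      have hks : k - u = (s - u) + (k - s) := by omega
      linarith [hW, hstep2, hmul]


end Aux

theorem rank_bound_of_locality {α : Type*} [DecidableEq α] (M : FinMatroid α)
    (r δ : ℕ) (hk : 0 < M.rk M.E) (hr : 0 < r) (hrk : r ≤ M.rk M.E) (hδ : 2 ≤ δ)
    (hloc : M.HasLocality r δ) :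
    M.rk M.E + ((M.rk M.E + r - 1) / r) * (δ - 1) ≤ M.E.card := by
  obtain ⟨W, hWE, hW⟩ := Aux.grow M r δ hr hδ hloc (M.rk M.E) ∅ (Finset.empty_subset _)
    (by omega)
  rw [Finset.card_empty, Aux.rk_empty M, Nat.sub_zero, Nat.zero_add] at hW
  have := Finset.card_le_card hWE
  omega
end

section
/- If M = (ρ, E) is a matroid with (r, δ)-locality, n = |E| and k = ρ(E) > 0, then the rate bound k/n ≤ r/(r + δ − 1) holds, i.e., k(r + δ − 1) ≤ n·r. -/
open Finset

namespace FinMatroid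

variable {α : Type*} [DecidableEq α]

lemma rk_union_le' (M : FinMatroid α) {X Y : Finset α} (hX : X ⊆ M.E) (hY : Y ⊆ M.E) :
    M.rk (X ∪ Y) ≤ M.rk X + M.rk Y := by
  have := M.rk_submod X Y hX hY
  omega

lemma rk_le_rk_add_card_sdiff' (M : FinMatroid α) {T Y : Finset α} (hTY : T ⊆ Y)
    (hY : Y ⊆ M.E) : M.rk Y ≤ M.rk T + (Y \ T).card := by
  have h1 : T ∪ (Y \ T) = Y := Finset.union_sdiff_of_subset hTY
  have h2 := M.rk_union_le' (hTY.trans hY) ((Finset.sdiff_subset (s := Y) (t := T)).trans hY)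
  have h3 := M.rk_le_card (Y \ T) ((Finset.sdiff_subset (s := Y) (t := T)).trans hY)
  rw [h1] at h2
  omega

lemma rk_union_le_of_forall' (M : FinMatroid α) {W : Finset α} (hW : W ⊆ M.E) :
    ∀ Y : Finset α, Y ⊆ M.E → (∀ x ∈ Y, M.rk (insert x W) ≤ M.rk W) →
      M.rk (W ∪ Y) ≤ M.rk W := by
  intro Y
  induction Y using Finset.induction_on with
  | empty => intro _ _; simp
  | insert a Y ha ih =>
    intro hsub hall
    have haE : a ∈ M.E := hsub (Finset.mem_insert_self a Y)
    have hYE : Y ⊆ M.E := (Finset.subset_insert a Y).trans hsub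
    have hIH : M.rk (W ∪ Y) ≤ M.rk W :=
      ih hYE fun x hx => hall x (Finset.mem_insert_of_mem hx)
    have hB : M.rk (insert a W) ≤ M.rk W := hall a (Finset.mem_insert_self a Y)
    have hEq : W ∪ insert a Y = (W ∪ Y) ∪ insert a W := by
      ext x
      simp only [Finset.mem_union, Finset.mem_insert]
      tauto
    have hAE : W ∪ Y ⊆ M.E := Finset.union_subset hW hYE
    have hBE : insert a W ⊆ M.E := Finset.insert_subset haE hW
    have hsubmod := M.rk_submod (W ∪ Y) (insert a W) hAE hBE
    have hWint : W ⊆ (W ∪ Y) ∩ insert a W :=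
      Finset.subset_inter Finset.subset_union_left (Finset.subset_insert a W)
    have hintE : (W ∪ Y) ∩ insert a W ⊆ M.E :=
      (Finset.inter_subset_left).trans hAE
    have hWle := M.rk_mono W ((W ∪ Y) ∩ insert a W) hWint hintE
    rw [hEq]
    omega

lemma exists_insert_rk_gt' (M : FinMatroid α) {W : Finset α} (hW : W ⊆ M.E)
    (h : M.rk W < M.rk M.E) : ∃ x ∈ M.E, M.rk W < M.rk (insert x W) := by
  by_contra hc
  push_neg at hc
  have := M.rk_union_le_of_forall' hW M.E (subset_refl _) hc
  rw [Finset.union_eq_right.mpr hW] at this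
  omega

lemma step' (M : FinMatroid α) {r δ : ℕ} (hδ : 2 ≤ δ) {W S : Finset α} (hW : W ⊆ M.E)
    (hS : M.LocalitySet r δ S) (hinc : M.rk W < M.rk (W ∪ S)) :
    M.rk (W ∪ S) ≤ M.rk W + r ∧
      W.card + (δ - 1) + M.rk (W ∪ S) ≤ (W ∪ S).card + M.rk W := by
  obtain ⟨hSE, hScard, hSloc⟩ := hS
  have hTS : W ∩ S ⊆ S := Finset.inter_subset_right
  have hTE : W ∩ S ⊆ M.E := hTS.trans hSE
  have hsub := M.rk_submod W S hW hSE
  have hTlt : M.rk (W ∩ S) < M.rk S := by omega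
  have hSd : S \ (S \ (W ∩ S)) = W ∩ S := by
    ext x
    simp only [Finset.mem_sdiff, Finset.mem_inter, not_and, not_not]
    tauto
  have hδle : δ ≤ (S \ (W ∩ S)).card := by
    apply hSloc _ Finset.sdiff_subset
    rw [hSd]; exact hTlt
  obtain ⟨X, hXsub, hXcard⟩ :=
    Finset.exists_subset_card_eq (show δ - 1 ≤ (S \ (W ∩ S)).card by omega)
  have hXS : X ⊆ S := hXsub.trans Finset.sdiff_subset
  have hrkle : M.rk (S \ X) ≤ M.rk S := M.rk_mono _ _ Finset.sdiff_subset hSE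
  have hrkSX : M.rk (S \ X) = M.rk S := by
    by_contra h
    have : δ ≤ X.card := hSloc X hXS (by omega)
    omega
  have hdis : Disjoint (W ∩ S) X :=
    (Finset.disjoint_of_subset_left hXsub Finset.sdiff_disjoint).symm
  have hTSX : W ∩ S ⊆ S \ X := Finset.subset_sdiff.mpr ⟨hTS, hdis⟩
  have hkey := M.rk_le_rk_add_card_sdiff' hTSX (Finset.sdiff_subset.trans hSE)
  have c1 : ((S \ X) \ (W ∩ S)).card = (S \ X).card - (W ∩ S).card :=
    Finset.card_sdiff_of_subset hTSX
  have c2 : (S \ X).card = S.card - X.card := Finset.card_sdiff_of_subset hXS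
  have c3 : X.card ≤ S.card := Finset.card_le_card hXS
  have c4 : (W ∩ S).card ≤ (S \ X).card := Finset.card_le_card hTSX
  have c5 : (W ∪ S).card + (W ∩ S).card = W.card + S.card :=
    Finset.card_union_add_card_inter W S
  have rT := M.rk_le_card (W ∩ S) hTE
  constructor <;> omega

lemma aux' (M : FinMatroid α) (r δ : ℕ) (hδ : 2 ≤ δ) (hloc : M.HasLocality r δ) :
    ∀ m (W : Finset α), W ⊆ M.E → M.rk M.E - M.rk W ≤ m →
      ∃ t U, W ⊆ U ∧ U ⊆ M.E ∧
        M.rk M.E ≤ M.rk W + t * r ∧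
        W.card + t * (δ - 1) + M.rk M.E ≤ U.card + M.rk W := by
  intro m
  induction m with
  | zero =>
    intro W hW hm
    have hle := M.rk_mono W M.E hW (subset_refl _)
    exact ⟨0, W, subset_refl _, hW, by omega, by omega⟩
  | succ m ih =>
    intro W hW hm
    by_cases hF : M.rk M.E ≤ M.rk W
    · exact ⟨0, W, subset_refl _, hW, by omega, by omega⟩
    · have hlt : M.rk W < M.rk M.E := by omega
      obtain ⟨x, hxE, hx⟩ := M.exists_insert_rk_gt' hW hlt
      obtain ⟨S, hxS, hS⟩ := hloc x hxE
      have hSE := hS.1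
      have hWS : W ∪ S ⊆ M.E := Finset.union_subset hW hSE
      have hinc : M.rk W < M.rk (W ∪ S) :=
        lt_of_lt_of_le hx (M.rk_mono _ _
          (Finset.insert_subset (Finset.mem_union_right _ hxS) Finset.subset_union_left) hWS)
      obtain ⟨h1, h2⟩ := M.step' hδ hW hS hinc
      have hm' : M.rk M.E - M.rk (W ∪ S) ≤ m := by
        have := M.rk_mono (W ∪ S) M.E hWS (subset_refl _); omega
      obtain ⟨t, U, hWU, hUE, hA, hB⟩ := ih (W ∪ S) hWS hm'
      refine ⟨t + 1, U, Finset.subset_union_left.trans hWU, hUE, ?_, ?_⟩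
      · calc M.rk M.E ≤ M.rk (W ∪ S) + t * r := hA
          _ ≤ (M.rk W + r) + t * r := Nat.add_le_add_right h1 _
          _ = M.rk W + (t + 1) * r := by ring
      · have e : (t + 1) * (δ - 1) = t * (δ - 1) + (δ - 1) := by ring
        rw [e]
        obtain ⟨a, ha⟩ : ∃ a, a = t * (δ - 1) := ⟨_, rfl⟩
        rw [← ha] at hB ⊢
        omega

end FinMatroid
theorem rate_bound_of_locality {α : Type*} [DecidableEq α] (M : FinMatroid α)
    (r δ : ℕ) (hk : 0 < M.rk M.E) (hr : 0 < r) (hrk : r ≤ M.rk M.E) (hδ : 2 ≤ δ)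
    (hloc : M.HasLocality r δ) :
    M.rk M.E * (r + δ - 1) ≤ M.E.card * r := by
  have h0 : M.rk ∅ = 0 :=
    Nat.le_zero.mp (by simpa using M.rk_le_card ∅ (Finset.empty_subset _))
  obtain ⟨t, U, _, hUE, hA, hB⟩ :=
    M.aux' r δ hδ hloc (M.rk M.E) ∅ (Finset.empty_subset _) (by omega)
  rw [h0] at hA hB
  simp only [Finset.card_empty] at hB
  have hUn : U.card ≤ M.E.card := Finset.card_le_card hUE
  have hA' : M.rk M.E ≤ t * r := by omega
  have hB' : M.rk M.E + t * (δ - 1) ≤ M.E.card := by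
    obtain ⟨a, ha⟩ : ∃ a, a = t * (δ - 1) := ⟨_, rfl⟩
    rw [← ha] at hB ⊢
    omega
  have e1 : r + δ - 1 = r + (δ - 1) := by omega
  rw [e1]
  calc M.rk M.E * (r + (δ - 1)) = M.rk M.E * r + M.rk M.E * (δ - 1) := by ring
    _ ≤ M.rk M.E * r + (t * r) * (δ - 1) :=
        Nat.add_le_add_left (Nat.mul_le_mul_right _ hA') _
    _ = (M.rk M.E + t * (δ - 1)) * r := by ring
    _ ≤ M.E.card * r := Nat.mul_le_mul_right _ hB'
end
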